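/- Let n ≥ 3 be an integer, ω₀ > 1, v̄ > 2·ln(n−1+ω₀), and set δ̂ = 2·ln(n−1+ω₀)/v̄. For each δ ∈ (δ̂, 1), let v*(δ) ∈ (v̄/(2−δ), v̄) be the unique solution of δ(2−δ)·v − 2(1−δ)·J̃(v) = δ·v̄, and let p₀*(δ) = (v̄ − δ·v*(δ))/(2(1−δ)). Then p₀*(δ) > v̄/2 for every δ ∈ (δ̂, 1), and the map δ ↦ p₀*(δ) is strictly increasing on (δ̂, 1). -/

import Mathlib

/-!
The equilibrium equation is equivalent to `(2 - δ) p + J̃(v*) = v̄`, where `p = p₀*(δ)`, and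
`J̃(v)` is the Bernstein polynomial of `m ↦ ln(m + ω₀)` evaluated at `v / v̄`. Its derivative is
`n - 1` times a Bernstein polynomial of the forward differences
`ln(m + 1 + ω₀) - ln(m + ω₀) ∈ [0, 1/(m + 1)]`, so `J̃` is nondecreasing and grows at most
logarithmically: `J̃(y) - J̃(x) ≤ (y - x)/x` for `0 < x ≤ y ≤ v̄`. If `p₀*(δ₂) ≤ p₀*(δ₁)` for
some `δ₁ < δ₂`, the identity forces `J̃(v₂) > J̃(v₁)`, hence `v₂ > v₁`, and then the growth bound
is incompatible with the two equilibrium equations as soon as `δ v̄ ≥ 2`; this holds on the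
whole range because `ln(n - 1 + ω₀) > 1`.
-/

open Real Finset

/-- The expected social-network benefit at threshold `v` under uniform valuations. -/
noncomputable def Jt (n : ℕ) (ω₀ vbar : ℝ) (v : ℝ) : ℝ :=
  ∑ m ∈ Finset.range n, (Nat.choose (n - 1) m : ℝ) * Real.log ((m : ℝ) + ω₀) *
    (v / vbar) ^ m * (1 - v / vbar) ^ (n - 1 - m)

open Polynomial

noncomputable def bernsteinSum (N : ℕ) (f : ℕ → ℝ) : ℝ[X] :=
  ∑ ν ∈ range (N + 1), f ν • bernsteinPolynomial ℝ N ν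

theorem derivative_bernsteinSum (N : ℕ) (f : ℕ → ℝ) :
    derivative (bernsteinSum (N + 1) f) =
      ((N : ℝ) + 1) • bernsteinSum N (fun ν => f (ν + 1) - f ν) := by
  have hshift : ∑ ν ∈ range (N + 1), f ν • bernsteinPolynomial ℝ N ν =
      ∑ ν ∈ range (N + 1), f (ν + 1) • bernsteinPolynomial ℝ N (ν + 1)
        + f 0 • bernsteinPolynomial ℝ N 0 := by
    rw [← sum_range_succ' (fun ν => f ν • bernsteinPolynomial ℝ N ν), sum_range_succ _ (N + 1),
      bernsteinPolynomial.eq_zero_of_lt ℝ (Nat.lt_succ_self N), smul_zero, add_zero]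
  have hnat : ((N + 1 : ℕ) : ℝ[X]) = C ((N : ℝ) + 1) := by simp
  simp only [bernsteinSum, derivative_sum, derivative_smul, sub_smul, sum_sub_distrib, hshift]
  rw [sum_range_succ']
  simp only [bernsteinPolynomial.derivative_succ, bernsteinPolynomial.derivative_zero,
    Nat.add_sub_cancel, hnat, neg_mul, ← smul_eq_C_mul, smul_sub, smul_neg, smul_add,
    sum_sub_distrib, smul_sum, smul_comm ((N : ℝ) + 1)]
  abel

theorem eval_bernsteinPolynomial_nonneg (N ν : ℕ) {x : ℝ} (hx : x ∈ Set.Icc 0 1) :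
    0 ≤ (bernsteinPolynomial ℝ N ν).eval x := by
  simpa [bernstein_apply, bernsteinPolynomial] using
    bernstein_nonneg (n := N) (ν := ν) (x := ⟨x, hx⟩)

theorem mul_eval_bernsteinPolynomial (N ν : ℕ) (x : ℝ) :
    ((N : ℝ) + 1) * x * (bernsteinPolynomial ℝ N ν).eval x =
      ((ν : ℝ) + 1) * (bernsteinPolynomial ℝ (N + 1) (ν + 1)).eval x := by
  have h := congrArg (Nat.cast (R := ℝ)) (Nat.add_one_mul_choose_eq N ν)
  push_cast at h
  simp only [bernsteinPolynomial, Nat.add_sub_add_right, eval_mul, eval_natCast, eval_pow, eval_X,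
    eval_sub, eval_one]
  linear_combination x ^ (ν + 1) * (1 - x) ^ (N - ν) * h

section
variable {N : ℕ} {f : ℕ → ℝ} {x y : ℝ}

theorem eval_bernsteinSum_nonneg (hf : ∀ ν, 0 ≤ f ν) (hx : x ∈ Set.Icc 0 1) :
    0 ≤ (bernsteinSum N f).eval x := by
  simp only [bernsteinSum, eval_finsetSum, eval_smul, smul_eq_mul]
  exact sum_nonneg fun ν _ => mul_nonneg (hf ν) (eval_bernsteinPolynomial_nonneg N ν hx)

theorem monotoneOn_eval_bernsteinSum (hf : Monotone f) :
    MonotoneOn (fun x => (bernsteinSum (N + 1) f).eval x) (Set.Icc 0 1) := by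
  refine monotoneOn_of_deriv_nonneg (convex_Icc 0 1) (Polynomial.continuousOn _)
    (Polynomial.differentiableOn _) fun x hx => ?_
  rw [Polynomial.deriv, derivative_bernsteinSum, eval_smul]
  exact smul_nonneg (by positivity)
    (eval_bernsteinSum_nonneg (fun ν => sub_nonneg.2 (hf ν.le_succ)) (interior_subset hx))

theorem mul_eval_derivative_bernsteinSum_le_one (hf : ∀ ν : ℕ, (ν + 1) * (f (ν + 1) - f ν) ≤ 1)
    (hx : x ∈ Set.Icc 0 1) : x * (derivative (bernsteinSum (N + 1) f)).eval x ≤ 1 := by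
  have hb := fun ν => eval_bernsteinPolynomial_nonneg (N + 1) ν hx
  calc x * (derivative (bernsteinSum (N + 1) f)).eval x
      = ∑ ν ∈ range (N + 1), (f (ν + 1) - f ν) * (((N : ℝ) + 1) * x *
          (bernsteinPolynomial ℝ N ν).eval x) := by
        rw [derivative_bernsteinSum]
        simp only [bernsteinSum, eval_smul, eval_finsetSum, smul_eq_mul, mul_sum]
        exact sum_congr rfl fun ν _ => by ring
    _ = ∑ ν ∈ range (N + 1), ((ν : ℝ) + 1) * (f (ν + 1) - f ν) *
          (bernsteinPolynomial ℝ (N + 1) (ν + 1)).eval x := by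
        simp only [mul_eval_bernsteinPolynomial]
        exact sum_congr rfl fun ν _ => by ring
    _ ≤ ∑ ν ∈ range (N + 1), (bernsteinPolynomial ℝ (N + 1) (ν + 1)).eval x :=
        sum_le_sum fun ν _ => mul_le_of_le_one_left (hb _) (hf ν)
    _ ≤ ∑ ν ∈ range (N + 2), (bernsteinPolynomial ℝ (N + 1) ν).eval x := by
        rw [sum_range_succ' _ (N + 1)]
        linarith [hb 0]
    _ = 1 := by rw [← eval_finsetSum, bernsteinPolynomial.sum, eval_one]

theorem eval_bernsteinSum_sub_le (hf : ∀ ν : ℕ, (ν + 1) * (f (ν + 1) - f ν) ≤ 1)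
    (hx : 0 < x) (hxy : x ≤ y) (hy : y ≤ 1) :
    (bernsteinSum (N + 1) f).eval y - (bernsteinSum (N + 1) f).eval x ≤ (y - x) / x := by
  rw [div_eq_inv_mul]
  refine (convex_Icc x y).image_sub_le_mul_sub_of_deriv_le (Polynomial.continuousOn _)
    (Polynomial.differentiableOn _) (fun t ht => ?_) x (Set.left_mem_Icc.2 hxy) y
    (Set.right_mem_Icc.2 hxy) hxy
  rw [interior_Icc] at ht
  have ht0 : 0 < t := hx.trans ht.1
  rw [Polynomial.deriv]
  calc (derivative (bernsteinSum (N + 1) f)).eval t ≤ t⁻¹ := by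
        rw [← one_div, le_div_iff₀ ht0, mul_comm]
        exact mul_eval_derivative_bernsteinSum_le_one hf ⟨ht0.le, by linarith [ht.2]⟩
    _ ≤ x⁻¹ := inv_anti₀ hx ht.1.le

end

theorem log_add_one_sub_log_le {a : ℝ} (ha : 0 < a) : log (a + 1) - log a ≤ a⁻¹ := by
  rw [← log_div (by positivity) ha.ne']
  calc log ((a + 1) / a) ≤ (a + 1) / a - 1 := log_le_sub_one_of_pos (by positivity)
    _ = a⁻¹ := by field_simp; ring

section
variable {ω₀ vbar x y : ℝ}

theorem monotone_log_natCast_add (hω : 0 < ω₀) : Monotone fun ν : ℕ => log (ν + ω₀) :=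
  fun _ _ h => log_le_log (by positivity) (by gcongr)

theorem natCast_add_one_mul_log_sub_le (hω : 1 ≤ ω₀) (ν : ℕ) :
    ((ν : ℝ) + 1) * (log ((ν + 1 : ℕ) + ω₀) - log (ν + ω₀)) ≤ 1 := by
  have ha : (0 : ℝ) < ν + ω₀ := by positivity
  rw [Nat.cast_succ, add_right_comm]
  calc ((ν : ℝ) + 1) * (log (ν + ω₀ + 1) - log (ν + ω₀)) ≤ ((ν : ℝ) + 1) * (ν + ω₀)⁻¹ := by
        gcongr; exact log_add_one_sub_log_le ha
    _ ≤ 1 := by rw [← div_eq_mul_inv, div_le_one ha]; linarith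

theorem Jt_eq_eval_bernsteinSum (N : ℕ) (ω₀ vbar v : ℝ) :
    Jt (N + 1) ω₀ vbar v = (bernsteinSum N fun ν => log (ν + ω₀)).eval (v / vbar) := by
  simp only [Jt, bernsteinSum, eval_finsetSum, eval_smul, bernsteinPolynomial, eval_mul,
    eval_natCast, eval_pow, eval_X, eval_sub, eval_one, Nat.add_sub_cancel, smul_eq_mul]
  exact sum_congr rfl fun ν _ => by ring

theorem monotoneOn_Jt (N : ℕ) (hω : 0 < ω₀) (hvbar : 0 < vbar) :
    MonotoneOn (Jt (N + 2) ω₀ vbar) (Set.Icc 0 vbar) := by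
  intro x hx y hy hxy
  simp only [Jt_eq_eval_bernsteinSum]
  refine monotoneOn_eval_bernsteinSum (monotone_log_natCast_add hω) ?_ ?_ (by gcongr)
  · exact ⟨div_nonneg hx.1 hvbar.le, div_le_one_of_le₀ hx.2 hvbar.le⟩
  · exact ⟨div_nonneg hy.1 hvbar.le, div_le_one_of_le₀ hy.2 hvbar.le⟩

theorem Jt_sub_Jt_le (N : ℕ) (hω : 1 ≤ ω₀) (hvbar : 0 < vbar) (hx : 0 < x) (hxy : x ≤ y)
    (hy : y ≤ vbar) : Jt (N + 2) ω₀ vbar y - Jt (N + 2) ω₀ vbar x ≤ (y - x) / x := by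
  have h := eval_bernsteinSum_sub_le (N := N) (f := fun ν : ℕ => log (ν + ω₀))
    (natCast_add_one_mul_log_sub_le hω) (div_pos hx hvbar)
    (div_le_div_of_nonneg_right hxy hvbar.le) (div_le_one_of_le₀ hy hvbar.le)
  rwa [← Jt_eq_eval_bernsteinSum, ← Jt_eq_eval_bernsteinSum, ← sub_div,
    div_div_div_cancel_right₀ hvbar.ne'] at h

end

noncomputable def uniformPrice (vbar δ v : ℝ) : ℝ := (vbar - δ * v) / (2 * (1 - δ))

section
variable {vbar δ v J : ℝ}

theorem half_lt_uniformPrice (hδ₀ : 0 < δ) (hδ₁ : δ < 1) (hv : v < vbar) :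
    vbar / 2 < uniformPrice vbar δ v := by
  rw [uniformPrice, lt_div_iff₀ (by linarith)]
  nlinarith

theorem two_mul_one_sub_mul_uniformPrice (hδ : δ ≠ 1) :
    2 * (1 - δ) * uniformPrice vbar δ v = vbar - δ * v := by
  rw [uniformPrice, mul_div_cancel₀]
  exact mul_ne_zero two_ne_zero (sub_ne_zero.2 hδ.symm)

theorem two_sub_mul_uniformPrice_add (hδ : δ ≠ 1)
    (h : δ * (2 - δ) * v - 2 * (1 - δ) * J = δ * vbar) :
    (2 - δ) * uniformPrice vbar δ v + J = vbar := by
  have hp := two_mul_one_sub_mul_uniformPrice (vbar := vbar) (v := v) hδ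
  have h1δ : (2 * (1 - δ)) ≠ 0 := mul_ne_zero two_ne_zero (sub_ne_zero.2 hδ.symm)
  apply mul_left_cancel₀ h1δ
  linear_combination (2 - δ) * hp - h

end

theorem uniformPrice_lt_uniformPrice {vbar δ₁ δ₂ v₁ v₂ J₁ J₂ : ℝ} (hδ₁ : 0 < δ₁) (hδ₁₂ : δ₁ < δ₂)
    (hδ₂ : δ₂ < 1) (hδ₂vbar : 2 ≤ δ₂ * vbar) (hv₁ : vbar / (2 - δ₁) < v₁) (hv₁vbar : v₁ < vbar)
    (hJ₁ : (2 - δ₁) * uniformPrice vbar δ₁ v₁ + J₁ = vbar)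
    (hJ₂ : (2 - δ₂) * uniformPrice vbar δ₂ v₂ + J₂ = vbar)
    (hmono : v₂ ≤ v₁ → J₂ ≤ J₁) (hgrowth : v₁ ≤ v₂ → J₂ - J₁ ≤ (v₂ - v₁) / v₁) :
    uniformPrice vbar δ₁ v₁ < uniformPrice vbar δ₂ v₂ := by
  have hp₁ := two_mul_one_sub_mul_uniformPrice (vbar := vbar) (v := v₁) (by linarith : δ₁ ≠ 1)
  have hp₂ := two_mul_one_sub_mul_uniformPrice (vbar := vbar) (v := v₂) (by linarith : δ₂ ≠ 1)
  have hhalf : vbar / 2 < uniformPrice vbar δ₁ v₁ := half_lt_uniformPrice hδ₁ (by linarith) hv₁vbar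
  set p₁ := uniformPrice vbar δ₁ v₁
  set p₂ := uniformPrice vbar δ₂ v₂
  by_contra! hp
  have hvbar : 0 < vbar := by nlinarith
  have hv₁pos : 0 < v₁ := lt_trans (div_pos hvbar (by linarith)) hv₁
  have hv₁' : vbar < (2 - δ₁) * v₁ := by rwa [div_lt_iff₀ (by linarith), mul_comm] at hv₁
  have hJ : J₂ - J₁ = (δ₂ - δ₁) * p₁ + (2 - δ₂) * (p₁ - p₂) := by linear_combination hJ₂ - hJ₁
  have hJ₁₂ : J₁ < J₂ := by nlinarith
  have hv₁₂ : v₁ < v₂ := lt_of_not_ge fun h => (hmono h).not_gt hJ₁₂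
  have hgrowth' : (J₂ - J₁) * v₁ ≤ v₂ - v₁ := (le_div_iff₀ hv₁pos).1 (hgrowth hv₁₂.le)
  have hv : δ₁ * δ₂ * (v₂ - v₁) = (δ₂ - δ₁) * (2 * p₁ - vbar) + 2 * δ₁ * (1 - δ₂) * (p₁ - p₂) := by
    linear_combination δ₁ * hp₂ - δ₂ * hp₁
  have hδ₂p₁ : 1 < δ₂ * p₁ := by nlinarith [mul_lt_mul_of_pos_left hhalf (hδ₁.trans hδ₁₂)]
  have h2p₁ : 2 * p₁ - vbar < δ₁ * v₁ := by
    have : (1 - δ₁) * (2 * p₁ - vbar) < (1 - δ₁) * (δ₁ * v₁) := by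
      nlinarith [mul_lt_mul_of_pos_left hv₁' hδ₁]
    exact lt_of_mul_lt_mul_left this (by linarith)
  have ha : 2 * p₁ - vbar < δ₁ * δ₂ * v₁ * p₁ := by
    nlinarith [mul_lt_mul_of_pos_left hδ₂p₁ (mul_pos hδ₁ hv₁pos)]
  have hb : 2 * (1 - δ₂) ≤ δ₂ * v₁ * (2 - δ₂) := by
    nlinarith [mul_lt_mul_of_pos_left hv₁' (hδ₁.trans hδ₁₂)]
  -- after multiplying the growth bound by `δ₁ δ₂`, `hv` compares it termwise with `ha` and `hb`
  rw [hJ] at hgrowth'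
  nlinarith [mul_lt_mul_of_pos_left ha (sub_pos.2 hδ₁₂),
    mul_le_mul_of_nonneg_left hb (mul_nonneg hδ₁.le (sub_nonneg.2 hp)),
    mul_le_mul_of_nonneg_left hgrowth' (mul_pos hδ₁ (hδ₁.trans hδ₁₂)).le]

theorem strictMonoOn_uniformPrice {vbar c : ℝ} {J vstar : ℝ → ℝ} (hc : 0 ≤ c)
    (hcvbar : 2 ≤ c * vbar) (hmono : MonotoneOn J (Set.Icc 0 vbar))
    (hgrowth : ∀ x y, 0 < x → x ≤ y → y ≤ vbar → J y - J x ≤ (y - x) / x)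
    (hvs : ∀ δ ∈ Set.Ioo c 1, vstar δ ∈ Set.Ioo (vbar / (2 - δ)) vbar ∧
      δ * (2 - δ) * vstar δ - 2 * (1 - δ) * J (vstar δ) = δ * vbar) :
    StrictMonoOn (fun δ => uniformPrice vbar δ (vstar δ)) (Set.Ioo c 1) := by
  have hvbar : 0 < vbar := by nlinarith
  have hvs_pos : ∀ δ ∈ Set.Ioo c 1, 0 < vstar δ := fun δ hδ =>
    (div_pos hvbar (by linarith [hδ.2])).trans (hvs δ hδ).1.1
  intro δ₁ hδ₁ δ₂ hδ₂ hδ₁₂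
  obtain ⟨⟨hv₁, hv₁vbar⟩, hE₁⟩ := hvs δ₁ hδ₁
  obtain ⟨⟨-, hv₂vbar⟩, hE₂⟩ := hvs δ₂ hδ₂
  exact uniformPrice_lt_uniformPrice (hc.trans_lt hδ₁.1) hδ₁₂ hδ₂.2
    (hcvbar.trans (by nlinarith [hδ₂.1])) hv₁ hv₁vbar
    (two_sub_mul_uniformPrice_add hδ₁.2.ne hE₁) (two_sub_mul_uniformPrice_add hδ₂.2.ne hE₂)
    (fun h => hmono ⟨(hvs_pos δ₂ hδ₂).le, hv₂vbar.le⟩ ⟨(hvs_pos δ₁ hδ₁).le, hv₁vbar.le⟩ h)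
    (fun h => hgrowth _ _ (hvs_pos δ₁ hδ₁) h hv₂vbar.le)

/-- For `δ ∈ (δ̂, 1)` with `δ̂ = 2·ln(n−1+ω₀)/v̄`, let `v*(δ)` be the equilibrium
valuation threshold and `p₀*(δ) = (v̄ − δ·v*(δ))/(2(1−δ))` the seller's uniform
price. Then `p₀*(δ) > v̄/2`, and `δ ↦ p₀*(δ)` is strictly increasing on `(δ̂, 1)`. -/
theorem stmt4 (n : ℕ) (hn : 3 ≤ n) (ω₀ vbar : ℝ) (hω : 1 < ω₀)
    (hv : 2 * Real.log ((n : ℝ) - 1 + ω₀) < vbar)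
    (vstar : ℝ → ℝ)
    (hvs : ∀ δ ∈ Set.Ioo (2 * Real.log ((n : ℝ) - 1 + ω₀) / vbar) 1,
      vstar δ ∈ Set.Ioo (vbar / (2 - δ)) vbar ∧
      δ * (2 - δ) * vstar δ - 2 * (1 - δ) * Jt n ω₀ vbar (vstar δ) = δ * vbar) :
    (∀ δ ∈ Set.Ioo (2 * Real.log ((n : ℝ) - 1 + ω₀) / vbar) 1,
      vbar / 2 < (vbar - δ * vstar δ) / (2 * (1 - δ))) ∧
    StrictMonoOn (fun δ => (vbar - δ * vstar δ) / (2 * (1 - δ)))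
      (Set.Ioo (2 * Real.log ((n : ℝ) - 1 + ω₀) / vbar) 1) := by
  have hL : 1 < log ((n : ℝ) - 1 + ω₀) := by
    have hn' : (3 : ℝ) ≤ n := by exact_mod_cast hn
    rw [lt_log_iff_exp_lt (by linarith)]
    linarith [exp_one_lt_d9]
  have hvbar : 0 < vbar := by linarith
  have hc : 0 < 2 * log ((n : ℝ) - 1 + ω₀) / vbar := by positivity
  obtain ⟨N, rfl⟩ : ∃ N, n = N + 2 := ⟨n - 2, by omega⟩
  refine ⟨fun δ hδ => half_lt_uniformPrice (hc.trans hδ.1) hδ.2 (hvs δ hδ).1.2, ?_⟩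
  exact strictMonoOn_uniformPrice hc.le (by rw [div_mul_cancel₀ _ hvbar.ne']; linarith)
    (monotoneOn_Jt N (by linarith) hvbar)
    (fun x y hx hxy hy => Jt_sub_Jt_le N hω.le hvbar hx hxy hy) hvs
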